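/- A matroid M is binary (has no minor isomorphic to U_{2,4}) if and only if Δ(B₁,B₂) ≠ 3 for every pair of bases B₁, B₂ of M, where Δ(B₁,B₂) is the number of unordered pairs {D₁,D₂} of bases of M with D₁ ∪ D₂ = B₁ ∪ B₂ and D₁ ∩ D₂ = B₁ ∩ B₂. -/

import Mathlib

/-!
The pairs `{D₁, D₂}` counted by `Δ(B₁, B₂)` are exactly the splittings of `W = B₁ ∆ B₂` into
halves `S`, `W \ S` for which `(B₁ ∩ B₂) ∪ S` and `(B₁ ∩ B₂) ∪ (W \ S)` are both bases.
If `|B₁ \ B₂| ≥ 3`, symmetric exchange at three elements of `B₁ \ B₂` gives three such pairs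
besides `{B₁, B₂}`, so `Δ ≥ 4`; if `|B₁ \ B₂| ≤ 1`, then `Δ = 1`. So `Δ = 3` forces `|W| = 4`,
and a four-element set has only three splittings into two pairs: `Δ = 3` holds exactly when
`(B₁ ∩ B₂) ∪ S` is a base for every two-element `S ⊆ W`, i.e. when
`M ↾ (B₁ ∪ B₂) ／ (B₁ ∩ B₂)` is `U_{2,4}`. Conversely, the bases of any minor `M ＼ A ／ C` are
the sets `S` with `G ∪ S` a base of `M`, for a fixed `G` disjoint from the minor's ground set,
so a `U_{2,4}` minor produces two bases with `Δ = 3` in the same way.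
-/

noncomputable def Matroid.deltaPairs {α : Type*} (M : Matroid α) (B₁ B₂ : Set α) : ℕ :=
  {p : Sym2 (Set α) | ∃ D₁ D₂, p = s(D₁, D₂) ∧ M.IsBase D₁ ∧ M.IsBase D₂ ∧
    D₁ ∪ D₂ = B₁ ∪ B₂ ∧ D₁ ∩ D₂ = B₁ ∩ B₂}.ncard

/-- Contraction of `C` in `M`, defined via the dual of a restriction of the dual. -/
noncomputable def Matroid.con {α : Type*} (M : Matroid α) (C : Set α) : Matroid α :=
  (Matroid.restrict M.dual (M.E \ C)).dual

open Set
open scoped symmDiff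

namespace Set

variable {α : Type*} {a : α} {G S W : Set α}

lemma exists_eq_pair_of_ncard_eq_two (hS : S.ncard = 2) (ha : a ∈ S) :
    ∃ z ∈ S \ {a}, S = {a, z} := by
  obtain ⟨z, hz⟩ := ncard_eq_one.1 (by rw [ncard_sdiff_singleton_of_mem ha, hS])
  refine ⟨z, hz ▸ rfl, ?_⟩
  rw [← hz, insert_sdiff_singleton, insert_eq_of_mem ha]

lemma exists_eq_pair_or_eq_sdiff_pair (hW : W.ncard = 4) (ha : a ∈ W) (hSW : S ⊆ W)
    (hS : S.ncard = 2) : ∃ z ∈ W \ {a}, S = {a, z} ∨ S = W \ {a, z} := by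
  by_cases haS : a ∈ S
  · obtain ⟨z, hz, rfl⟩ := exists_eq_pair_of_ncard_eq_two hS haS
    exact ⟨z, sdiff_subset_sdiff_left hSW hz, .inl rfl⟩
  have hcompl : (W \ S).ncard = 2 := by
    rw [ncard_sdiff' hSW (finite_of_ncard_ne_zero (by omega)), hW, hS]
  obtain ⟨z, hz, h⟩ := exists_eq_pair_of_ncard_eq_two hcompl ⟨ha, haS⟩
  exact ⟨z, sdiff_subset_sdiff_left sdiff_subset hz,
    .inr (h ▸ (sdiff_sdiff_cancel_left hSW).symm)⟩

lemma disjoint_inter_symmDiff (s t : Set α) : Disjoint (s ∩ t) (s ∆ t) :=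
  (disjoint_symmDiff_inf s t).symm

lemma inter_union_symmDiff (s t : Set α) : s ∩ t ∪ s ∆ t = s ∪ t :=
  inf_sup_symmDiff s t

lemma union_inter_union_sdiff (G S W : Set α) : (G ∪ S) ∩ (G ∪ (W \ S)) = G := by
  rw [← union_inter_distrib_left, inter_sdiff_self, union_empty]

lemma union_symmDiff_union_sdiff (hGW : Disjoint G W) (hS : S ⊆ W) :
    (G ∪ S) ∆ (G ∪ (W \ S)) = W := by
  ext z
  have := hGW.notMem_of_mem_right (a := z)
  have := @hS z
  simp only [mem_symmDiff, mem_union, mem_sdiff]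
  tauto

end Set

namespace Matroid

variable {α : Type*} {M : Matroid α} {a e : α} {B₀ B₁ B₂ C G I J S T W X Y : Set α}

lemma coindep_of_subset_loops (hX : X ⊆ M.loops) : M.Coindep X := by
  obtain ⟨B, hB⟩ := M.exists_isBase
  exact coindep_iff_subset_compl_isBase.2 ⟨B, hB, subset_sdiff.2
    ⟨hX.trans M.loops_subset_ground, (hB.indep.disjoint_loops.mono_right hX).symm⟩⟩

lemma IsBasis.contract_isBase_iff (hI : M.IsBasis I C) :
    (M ／ C).IsBase S ↔ M.IsBase (S ∪ I) ∧ Disjoint S C := by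
  rw [hI.contract_eq_contract_delete,
    (coindep_of_subset_loops hI.sdiff_subset_loops_contract).delete_isBase_iff,
    hI.indep.contract_isBase_iff, and_assoc, ← disjoint_union_right,
    union_sdiff_cancel hI.subset]

lemma IsBase.isBasis_iff_isBase_union (hB₀ : M.IsBase B₀) (hX : M.IsBasis (B₀ ∩ X) X)
    (hJX : J ⊆ X) : M.IsBasis J X ↔ M.IsBase (J ∪ (B₀ \ X)) := by
  have lift : ∀ J, M.IsBasis J X → M.IsBase (J ∪ (B₀ \ X)) := by
    intro J hJ
    have hF : (M ／ X).Indep (B₀ \ X) := by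
      rw [hX.contract_indep_iff, sdiff_union_inter]
      exact ⟨hB₀.indep, disjoint_sdiff_right⟩
    rw [hJ.contract_indep_iff, union_comm] at hF
    refine hF.1.isBase_of_spanning ?_
    rw [spanning_iff_closure_eq hF.1.subset_ground, ← closure_union_closure_left_eq,
      hJ.closure_eq_closure, closure_union_closure_left_eq]
    exact hB₀.closure_of_superset fun z hz ↦ by by_cases z ∈ X <;> simp_all
  refine ⟨lift J, fun hJF ↦ ?_⟩
  obtain ⟨J', hJ', hJJ'⟩ := (hJF.indep.subset subset_union_left).subset_isBasis_of_subset hJX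
  have hJ'J := hJF.eq_of_subset_isBase (lift J' hJ') (union_subset_union_left _ hJJ')
  rwa [hJJ'.antisymm fun z hz ↦ (hJ'J.symm.subset (Or.inl hz)).resolve_right
    fun h ↦ h.2 (hJ'.subset hz)]

lemma exists_isBase_union_iff_delete_contract (M : Matroid α) (A C : Set α) :
    ∃ G ⊆ M.E, Disjoint G (M ＼ A ／ C).E ∧
      ∀ S ⊆ (M ＼ A ／ C).E, ((M ＼ A ／ C).IsBase S ↔ M.IsBase (G ∪ S)) := by
  rw [← contract_inter_ground_eq]
  obtain ⟨I, hI⟩ := (M ＼ A).exists_isBasis (C ∩ (M ＼ A).E)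
  obtain ⟨B', hB', hIB'⟩ := hI.indep.exists_isBase_superset
  rw [delete_isBase_iff] at hB'
  obtain ⟨B₀, hB₀, rfl⟩ := hB'.exists_isBase
  have hIE : I ⊆ M.E \ A := hI.indep.subset_ground
  refine ⟨I ∪ B₀ \ (M.E \ A),
    union_subset (hIE.trans sdiff_subset) (sdiff_subset.trans hB₀.subset_ground),
    disjoint_union_left.2 ⟨disjoint_sdiff_right.mono_left hI.subset,
      disjoint_sdiff_left.mono_right sdiff_subset⟩, fun S hS ↦ ?_⟩
  have hSI : S ∪ I ⊆ M.E \ A := union_subset (hS.trans sdiff_subset) hIE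
  rw [hI.contract_isBase_iff, and_iff_left (disjoint_sdiff_left.mono_left hS), delete_isBase_iff,
    hB₀.isBasis_iff_isBase_union hB' hSI, union_comm S, union_right_comm]

lemma IsBase.exists_symm_exchange (hB₁ : M.IsBase B₁) (hB₂ : M.IsBase B₂) (he : e ∈ B₁ \ B₂) :
    ∃ f ∈ B₂ \ B₁, M.IsBase (insert f (B₁ \ {e})) ∧ M.IsBase (insert e (B₂ \ {f})) := by
  have heE : e ∈ M.E := hB₁.subset_ground he.1
  have hC := hB₂.fundCircuit_isCircuit heE he.2
  -- `e` is spanned by the rest of its fundamental circuit, but not by `B₁ \ {e}`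
  obtain ⟨f, ⟨hfC, hfe⟩, hfcl⟩ :
      ∃ f ∈ M.fundCircuit e B₂ \ {e}, f ∉ M.closure (B₁ \ {e}) := by
    by_contra! h
    exact hB₁.indep.notMem_closure_sdiff_of_mem he.1 <| M.closure_subset_closure_of_subset_closure
      h (hC.mem_closure_sdiff_singleton_of_mem (M.mem_fundCircuit e B₂))
  have hfB₂ : f ∈ B₂ := (M.fundCircuit_subset_insert e B₂ hfC).resolve_left hfe
  have hfB₁ : f ∉ B₁ := fun h ↦
    hfcl (M.subset_closure _ (sdiff_subset.trans hB₁.subset_ground) ⟨h, hfe⟩)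
  refine ⟨f, ⟨hfB₂, hfB₁⟩, hB₁.exchange_base_of_notMem_closure he.1 hfcl (hB₂.subset_ground hfB₂),
    hB₂.exchange_isBase_of_indep he.2 ?_⟩
  have := (hB₂.indep.mem_fundCircuit_iff (by rwa [hB₂.closure_eq]) he.2).1 hfC
  rwa [← insert_sdiff_singleton_comm (Ne.symm hfe)] at this

lemma encard_eq_encard_of_isBase_union (hG : G.Finite) (hGS : Disjoint G S) (hGT : Disjoint G T)
    (hS : M.IsBase (G ∪ S)) (hT : M.IsBase (G ∪ T)) : S.encard = T.encard := by
  have := hS.encard_eq_encard_of_isBase hT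
  rw [encard_union_eq hGS, encard_union_eq hGT] at this
  exact (WithTop.add_left_inj hG.encard_lt_top.ne).1 this

def basePairs (M : Matroid α) (B₁ B₂ : Set α) : Set (Sym2 (Set α)) :=
  {p | ∃ D₁ D₂, p = s(D₁, D₂) ∧ M.IsBase D₁ ∧ M.IsBase D₂ ∧
    D₁ ∪ D₂ = B₁ ∪ B₂ ∧ D₁ ∩ D₂ = B₁ ∩ B₂}

lemma deltaPairs_eq_ncard_basePairs : M.deltaPairs B₁ B₂ = (M.basePairs B₁ B₂).ncard := rfl

lemma mk_mem_basePairs_iff : s(X, Y) ∈ M.basePairs B₁ B₂ ↔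
    M.IsBase X ∧ M.IsBase Y ∧ X ∪ Y = B₁ ∪ B₂ ∧ X ∩ Y = B₁ ∩ B₂ := by
  refine ⟨?_, fun h ↦ ⟨X, Y, rfl, h⟩⟩
  rintro ⟨D₁, D₂, hp, hD₁, hD₂, hU, hI⟩
  rcases Sym2.eq_iff.1 hp with ⟨rfl, rfl⟩ | ⟨rfl, rfl⟩
  · exact ⟨hD₁, hD₂, hU, hI⟩
  · exact ⟨hD₂, hD₁, union_comm X Y ▸ hU, inter_comm X Y ▸ hI⟩

lemma basePairs_subset_singleton (hB₂ : M.IsBase B₂) (h : (B₁ \ B₂).Subsingleton) :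
    M.basePairs B₁ B₂ ⊆ {s(B₁, B₂)} := by
  have key : ∀ {X Y}, M.IsBase Y → X ∪ Y = B₁ ∪ B₂ → X ∩ Y = B₁ ∩ B₂ → Y ⊆ B₂ →
      X = B₁ ∧ Y = B₂ := by
    intro X Y hY hU hI hYB
    obtain rfl := hY.eq_of_subset_isBase hB₂ hYB
    exact ⟨eq_of_inf_eq_sup_eq hI hU, rfl⟩
  rintro _ ⟨D₁, D₂, rfl, hD₁, hD₂, hU, hI⟩
  by_cases h₂ : D₂ ⊆ B₂
  · obtain ⟨rfl, rfl⟩ := key hD₂ hU hI h₂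
    rfl
  by_cases h₁ : D₁ ⊆ B₂
  · obtain ⟨rfl, rfl⟩ := key hD₁ (by rwa [union_comm]) (by rwa [inter_comm]) h₁
    exact Sym2.eq_swap
  -- otherwise the only element of `B₁ \ B₂` lies in both `D₁` and `D₂`, i.e. in `B₁ ∩ B₂`
  obtain ⟨u, hu₁, hu₂⟩ := not_subset.1 h₁
  obtain ⟨v, hv₁, hv₂⟩ := not_subset.1 h₂
  have huv : u = v := h ⟨(hU ▸ Or.inl hu₁ : u ∈ B₁ ∪ B₂).resolve_right hu₂, hu₂⟩
    ⟨(hU ▸ Or.inr hv₁ : v ∈ B₁ ∪ B₂).resolve_right hv₂, hv₂⟩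
  exact absurd (hI ▸ ⟨hu₁, huv ▸ hv₁⟩ : u ∈ B₁ ∩ B₂).2 hu₂

lemma exchange_mem_basePairs {f : α} (he : e ∈ B₁ \ B₂) (hf : f ∈ B₂ \ B₁)
    (h₁ : M.IsBase (insert f (B₁ \ {e}))) (h₂ : M.IsBase (insert e (B₂ \ {f}))) :
    s(insert f (B₁ \ {e}), insert e (B₂ \ {f})) ∈ M.basePairs B₁ B₂ := by
  refine mk_mem_basePairs_iff.2 ⟨h₁, h₂, ?_, ?_⟩ <;> ext z <;>
    by_cases hze : z = e <;> by_cases hzf : z = f <;> simp_all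

lemma exchange_ne_self {e' f : α} (he' : e' ∈ B₁ \ B₂) (he'e : e' ≠ e) (hf : f ∉ B₁) :
    s(insert f (B₁ \ {e}), insert e (B₂ \ {f})) ≠ s(B₁, B₂) := by
  rw [Ne, Sym2.eq_iff, not_or]
  exact ⟨fun h ↦ hf (h.1 ▸ mem_insert f _),
    fun h ↦ he'.2 (h.1 ▸ mem_insert_of_mem f ⟨he'.1, he'e⟩)⟩

lemma exchange_ne_exchange {e₁ e₂ e₃ f₁ f₂ : α} (he₂ : e₂ ∈ B₁ \ B₂) (he₃ : e₃ ∈ B₁ \ B₂)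
    (hf₂ : f₂ ∉ B₁) (h₁₂ : e₁ ≠ e₂) (h₁₃ : e₁ ≠ e₃) (h₂₃ : e₂ ≠ e₃) :
    s(insert f₁ (B₁ \ {e₁}), insert e₁ (B₂ \ {f₁})) ≠
      s(insert f₂ (B₁ \ {e₂}), insert e₂ (B₂ \ {f₂})) := by
  rw [Ne, Sym2.eq_iff, not_or]
  constructor
  · rintro ⟨h, -⟩
    have : e₂ ∈ insert f₂ (B₁ \ {e₂}) := h ▸ mem_insert_of_mem f₁ ⟨he₂.1, h₁₂.symm⟩
    have he₂f₂ : e₂ = f₂ := this.resolve_right fun h ↦ h.2 rfl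
    exact hf₂ (he₂f₂ ▸ he₂.1)
  · rintro ⟨h, -⟩
    have : e₃ ∈ insert e₂ (B₂ \ {f₂}) := h ▸ mem_insert_of_mem f₁ ⟨he₃.1, h₁₃.symm⟩
    exact this.elim (fun h ↦ h₂₃ h.symm) fun h ↦ he₃.2 h.1

lemma four_le_deltaPairs (hB₁ : M.IsBase B₁) (hB₂ : M.IsBase B₂)
    (hfin : (M.basePairs B₁ B₂).Finite) {e₁ e₂ e₃ : α} (he₁ : e₁ ∈ B₁ \ B₂)
    (he₂ : e₂ ∈ B₁ \ B₂) (he₃ : e₃ ∈ B₁ \ B₂) (h₁₂ : e₁ ≠ e₂) (h₁₃ : e₁ ≠ e₃) (h₂₃ : e₂ ≠ e₃) :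
    4 ≤ M.deltaPairs B₁ B₂ := by
  obtain ⟨f₁, hf₁, hX₁, hY₁⟩ := hB₁.exists_symm_exchange hB₂ he₁
  obtain ⟨f₂, hf₂, hX₂, hY₂⟩ := hB₁.exists_symm_exchange hB₂ he₂
  obtain ⟨f₃, hf₃, hX₃, hY₃⟩ := hB₁.exists_symm_exchange hB₂ he₃
  have hsub : {s(insert f₁ (B₁ \ {e₁}), insert e₁ (B₂ \ {f₁})),
      s(insert f₂ (B₁ \ {e₂}), insert e₂ (B₂ \ {f₂})),
      s(insert f₃ (B₁ \ {e₃}), insert e₃ (B₂ \ {f₃}))} ⊆ M.basePairs B₁ B₂ \ {s(B₁, B₂)} := by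
    rintro _ (rfl | rfl | rfl)
    · exact ⟨exchange_mem_basePairs he₁ hf₁ hX₁ hY₁, exchange_ne_self he₂ h₁₂.symm hf₁.2⟩
    · exact ⟨exchange_mem_basePairs he₂ hf₂ hX₂ hY₂, exchange_ne_self he₁ h₁₂ hf₂.2⟩
    · exact ⟨exchange_mem_basePairs he₃ hf₃ hX₃ hY₃, exchange_ne_self he₁ h₁₃ hf₃.2⟩
  have h3 := ncard_le_ncard hsub (hfin.subset sdiff_subset)
  rw [ncard_eq_three.2 ⟨_, _, _, exchange_ne_exchange he₂ he₃ hf₂.2 h₁₂ h₁₃ h₂₃,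
    exchange_ne_exchange he₃ he₂ hf₃.2 h₁₃ h₁₂ h₂₃.symm,
    exchange_ne_exchange he₃ he₁ hf₃.2 h₂₃ h₁₂.symm h₁₃.symm, rfl⟩,
    ncard_sdiff_singleton_of_mem (mk_mem_basePairs_iff.2 ⟨hB₁, hB₂, rfl, rfl⟩)] at h3
  rw [deltaPairs_eq_ncard_basePairs]
  omega

lemma ncard_symmDiff_eq_four_of_deltaPairs_eq_three (hfin : M.E.Finite) (hB₁ : M.IsBase B₁)
    (hB₂ : M.IsBase B₂) (h3 : M.deltaPairs B₁ B₂ = 3) : (B₁ ∆ B₂).ncard = 4 := by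
  have hPfin : (M.basePairs B₁ B₂).Finite := finite_of_ncard_ne_zero (by
    rw [← deltaPairs_eq_ncard_basePairs]; omega)
  have hfin₁ : (B₁ \ B₂).Finite := hfin.subset (sdiff_subset.trans hB₁.subset_ground)
  have hfin₂ : (B₂ \ B₁).Finite := hfin.subset (sdiff_subset.trans hB₂.subset_ground)
  have hcomm : (B₂ \ B₁).ncard = (B₁ \ B₂).ncard := by
    rw [ncard_def, ncard_def, hB₁.encard_sdiff_comm hB₂]
  rw [Set.symmDiff_def, ncard_union_eq disjoint_sdiff_sdiff hfin₁ hfin₂, hcomm]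
  have hle : (B₁ \ B₂).ncard ≤ 2 := by
    by_contra! h
    obtain ⟨t, hts, ht⟩ := exists_subset_card_eq h
    obtain ⟨e₁, e₂, e₃, h₁₂, h₁₃, h₂₃, rfl⟩ := ncard_eq_three.1 ht
    have := four_le_deltaPairs hB₁ hB₂ hPfin (hts (by simp)) (hts (by simp)) (hts (by simp))
      h₁₂ h₁₃ h₂₃
    omega
  have hge : 2 ≤ (B₁ \ B₂).ncard := by
    by_contra! h
    have := hfin₁.to_subtype
    have := ncard_le_ncard (basePairs_subset_singleton hB₂
      (ncard_le_one_iff_subsingleton.1 (Nat.lt_succ_iff.1 h))) (finite_singleton _)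
    rw [← deltaPairs_eq_ncard_basePairs, ncard_singleton] at this
    omega
  omega

def splitPair (G W S : Set α) : Sym2 (Set α) := s(G ∪ S, G ∪ (W \ S))

lemma splitPair_sdiff (hS : S ⊆ W) : splitPair G W (W \ S) = splitPair G W S := by
  rw [splitPair, splitPair, sdiff_sdiff_cancel_left hS]
  exact Sym2.eq_swap

lemma splitPair_mem_basePairs_iff (hS : S ⊆ B₁ ∆ B₂) :
    splitPair (B₁ ∩ B₂) (B₁ ∆ B₂) S ∈ M.basePairs B₁ B₂ ↔
      M.IsBase (B₁ ∩ B₂ ∪ S) ∧ M.IsBase (B₁ ∩ B₂ ∪ (B₁ ∆ B₂ \ S)) := by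
  rw [splitPair, mk_mem_basePairs_iff, ← union_union_distrib_left, union_sdiff_cancel hS,
    inter_union_symmDiff, union_inter_union_sdiff]
  simp only [and_true]

lemma exists_splitPair_of_mem_basePairs {p : Sym2 (Set α)} (hp : p ∈ M.basePairs B₁ B₂) :
    ∃ S ⊆ B₁ ∆ B₂, p = splitPair (B₁ ∩ B₂) (B₁ ∆ B₂) S := by
  obtain ⟨D₁, D₂, rfl, -, -, hU, hI⟩ := hp
  refine ⟨D₁ ∩ B₁ ∆ B₂, inter_subset_right, Sym2.eq_iff.2 (.inl ?_)⟩
  constructor <;> ext z <;> have hU := Set.ext_iff.1 hU z <;> have hI := Set.ext_iff.1 hI z <;>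
    simp only [mem_union, mem_inter_iff, mem_symmDiff, mem_sdiff] at hU hI ⊢ <;> tauto

lemma injOn_splitPair_pair (hGW : Disjoint G W) (ha : a ∈ W) :
    InjOn (fun z ↦ splitPair G W {a, z}) (W \ {a}) := by
  rintro z₁ ⟨hz₁, hz₁a⟩ z₂ - h
  rcases Sym2.eq_iff.1 h with ⟨h, -⟩ | ⟨h, -⟩
  · have : z₁ ∈ G ∪ {a, z₂} := h ▸ by simp
    simp only [mem_union, mem_insert_iff, mem_singleton_iff] at this hz₁a
    exact (this.resolve_left (hGW.notMem_of_mem_right hz₁)).resolve_left hz₁a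
  · have : a ∈ G ∪ (W \ {a, z₂}) := h ▸ by simp
    simp [hGW.notMem_of_mem_right ha] at this

lemma basePairs_subset_image_splitPair (hG : (B₁ ∩ B₂).Finite) (hW : (B₁ ∆ B₂).ncard = 4)
    (ha : a ∈ B₁ ∆ B₂) : M.basePairs B₁ B₂ ⊆
      (fun z ↦ splitPair (B₁ ∩ B₂) (B₁ ∆ B₂) {a, z}) '' (B₁ ∆ B₂ \ {a}) := by
  intro p hp
  obtain ⟨S, hSW, rfl⟩ := exists_splitPair_of_mem_basePairs hp
  obtain ⟨h₁, h₂⟩ := (splitPair_mem_basePairs_iff hSW).1 hp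
  have hGW : Disjoint (B₁ ∩ B₂) (B₁ ∆ B₂) := disjoint_inter_symmDiff B₁ B₂
  have hS : S.ncard = 2 := by
    have h := congrArg ENat.toNat <| encard_eq_encard_of_isBase_union hG (hGW.mono_right hSW)
      (hGW.mono_right sdiff_subset) h₁ h₂
    rw [← ncard_def, ← ncard_def, ncard_sdiff' hSW (finite_of_ncard_ne_zero (by omega)), hW] at h
    omega
  obtain ⟨z, hz, rfl | rfl⟩ := exists_eq_pair_or_eq_sdiff_pair hW ha hSW hS
  · exact ⟨z, hz, rfl⟩
  · exact ⟨z, hz, (splitPair_sdiff (pair_subset ha hz.1)).symm⟩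

theorem deltaPairs_eq_three_iff (hG : (B₁ ∩ B₂).Finite) (hW : (B₁ ∆ B₂).ncard = 4) :
    M.deltaPairs B₁ B₂ = 3 ↔ ∀ S ⊆ B₁ ∆ B₂, S.ncard = 2 → M.IsBase (B₁ ∩ B₂ ∪ S) := by
  obtain ⟨a, ha⟩ : (B₁ ∆ B₂).Nonempty := nonempty_of_ncard_ne_zero (by omega)
  have hWfin : (B₁ ∆ B₂).Finite := finite_of_ncard_ne_zero (by omega)
  set Q := (fun z ↦ splitPair (B₁ ∩ B₂) (B₁ ∆ B₂) {a, z}) '' (B₁ ∆ B₂ \ {a})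
  have hsub : M.basePairs B₁ B₂ ⊆ Q := basePairs_subset_image_splitPair hG hW ha
  have hQ : Q.ncard = 3 := by
    rw [(injOn_splitPair_pair (disjoint_inter_symmDiff B₁ B₂) ha).ncard_image,
      ncard_sdiff_singleton_of_mem ha, hW]
  rw [deltaPairs_eq_ncard_basePairs]
  constructor
  · intro h3 S hSW hS
    have heq := eq_of_subset_of_ncard_le hsub (by omega) (hWfin.sdiff.image _)
    have hmem : ∀ z ∈ B₁ ∆ B₂ \ {a}, M.IsBase (B₁ ∩ B₂ ∪ {a, z}) ∧
        M.IsBase (B₁ ∩ B₂ ∪ (B₁ ∆ B₂ \ {a, z})) := fun z hz ↦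
      (splitPair_mem_basePairs_iff (pair_subset ha hz.1)).1 (heq ▸ mem_image_of_mem _ hz)
    obtain ⟨z, hz, rfl | rfl⟩ := exists_eq_pair_or_eq_sdiff_pair hW ha hSW hS
    exacts [(hmem z hz).1, (hmem z hz).2]
  · intro hbase
    have hsup : Q ⊆ M.basePairs B₁ B₂ := by
      rintro _ ⟨z, hz, rfl⟩
      have hzW : {a, z} ⊆ B₁ ∆ B₂ := pair_subset ha hz.1
      have hz2 : ({a, z} : Set α).ncard = 2 := ncard_pair (Ne.symm hz.2)
      refine (splitPair_mem_basePairs_iff hzW).2 ⟨hbase _ hzW hz2, hbase _ sdiff_subset ?_⟩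
      rw [ncard_sdiff' hzW hWfin, hW, hz2]
    rw [hsub.antisymm hsup, hQ]

lemma con_eq_contract (M : Matroid α) (C : Set α) : M.con C = M ／ C := rfl

def HasU24Minor (M : Matroid α) : Prop :=
  ∃ (A C : Set α) (N : Matroid α), A ⊆ M.E ∧ C ⊆ M.E ∧ Disjoint A C ∧
    N = (M.restrict (M.E \ A)).con C ∧
    N.E.ncard = 4 ∧ (∀ B, N.IsBase B ↔ B ⊆ N.E ∧ B.ncard = 2)

lemma hasU24Minor_of_forall_isBase (hG : G.Finite) (hGW : Disjoint G W) (hE : G ∪ W ⊆ M.E)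
    (hW : W.ncard = 4) (hbase : ∀ S ⊆ W, S.ncard = 2 → M.IsBase (G ∪ S)) : M.HasU24Minor := by
  obtain ⟨S₀, hS₀W, hS₀⟩ := exists_subset_card_eq (show 2 ≤ W.ncard by omega)
  have hB₀ := hbase S₀ hS₀W hS₀
  refine ⟨M.E \ (G ∪ W), G, _, sdiff_subset, subset_union_left.trans hE,
    disjoint_sdiff_left.mono_right subset_union_left, rfl, ?_⟩
  rw [sdiff_sdiff_cancel_left hE, con_eq_contract]
  have hEW : ((M ↾ (G ∪ W)) ／ G).E = W := union_sdiff_cancel_left hGW.le_bot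
  have hGi : (M ↾ (G ∪ W)).Indep G :=
    restrict_indep_iff.2 ⟨hB₀.indep.subset subset_union_left, subset_union_left⟩
  rw [hEW]
  refine ⟨hW, fun S ↦ ?_⟩
  rw [hGi.contract_isBase_iff,
    (hB₀.spanning.superset (union_subset_union_right G hS₀W) hE).isBase_restrict_iff, union_comm S]
  constructor
  · rintro ⟨⟨hS, hSGW⟩, hSG⟩
    have hSW : S ⊆ W := Disjoint.left_le_of_le_sup_left (subset_union_right.trans hSGW) hSG
    refine ⟨hSW, ?_⟩
    rw [ncard_def, encard_eq_encard_of_isBase_union hG (hGW.mono_right hSW)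
      (hGW.mono_right hS₀W) hS hB₀, ← ncard_def, hS₀]
  · rintro ⟨hSW, hS⟩
    exact ⟨⟨hbase S hSW hS, union_subset_union_right G hSW⟩, hGW.symm.mono_left hSW⟩

lemma HasU24Minor.exists_deltaPairs_eq_three (h : M.HasU24Minor) (hfin : M.E.Finite) :
    ∃ B₁ B₂, M.IsBase B₁ ∧ M.IsBase B₂ ∧ M.deltaPairs B₁ B₂ = 3 := by
  obtain ⟨A, C, N, -, -, -, rfl, h4, hN⟩ := h
  rw [con_eq_contract, restrict_compl] at h4 hN
  obtain ⟨G, hGE, hGW, hG⟩ := M.exists_isBase_union_iff_delete_contract A C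
  set W := (M ＼ A ／ C).E
  have hbase : ∀ S ⊆ W, S.ncard = 2 → M.IsBase (G ∪ S) :=
    fun S hSW hS ↦ (hG S hSW).1 ((hN S).2 ⟨hSW, hS⟩)
  obtain ⟨S₀, hS₀W, hS₀⟩ := exists_subset_card_eq (show 2 ≤ W.ncard by omega)
  refine ⟨G ∪ S₀, G ∪ (W \ S₀), hbase S₀ hS₀W hS₀,
    hbase _ sdiff_subset (by rw [ncard_sdiff' hS₀W (finite_of_ncard_ne_zero (by omega)), h4, hS₀]),
    ?_⟩
  have hG₀ := union_inter_union_sdiff G S₀ W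
  have hW₀ := union_symmDiff_union_sdiff hGW hS₀W
  rw [deltaPairs_eq_three_iff (by rw [hG₀]; exact hfin.subset hGE) (by rw [hW₀, h4]), hG₀, hW₀]
  exact hbase

lemma hasU24Minor_of_deltaPairs_eq_three (hfin : M.E.Finite) (hB₁ : M.IsBase B₁)
    (hB₂ : M.IsBase B₂) (h3 : M.deltaPairs B₁ B₂ = 3) : M.HasU24Minor := by
  have hW := ncard_symmDiff_eq_four_of_deltaPairs_eq_three hfin hB₁ hB₂ h3
  have hG : (B₁ ∩ B₂).Finite := hfin.subset (inter_subset_left.trans hB₁.subset_ground)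
  refine hasU24Minor_of_forall_isBase hG (disjoint_inter_symmDiff B₁ B₂) ?_ hW
    ((deltaPairs_eq_three_iff hG hW).1 h3)
  rw [inter_union_symmDiff]
  exact union_subset hB₁.subset_ground hB₂.subset_ground

end Matroid

/-- A matroid is binary (has no minor isomorphic to `U_{2,4}`) iff `Δ(B₁,B₂) ≠ 3` for every
pair of bases. -/
theorem binary_iff {α : Type*} (M : Matroid α) (hfin : M.E.Finite) :
    (¬ ∃ (A C : Set α) (N : Matroid α), A ⊆ M.E ∧ C ⊆ M.E ∧ Disjoint A C ∧
        N = (M.restrict (M.E \ A)).con C ∧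
        N.E.ncard = 4 ∧ (∀ B, N.IsBase B ↔ B ⊆ N.E ∧ B.ncard = 2)) ↔
    ∀ B₁ B₂, M.IsBase B₁ → M.IsBase B₂ → M.deltaPairs B₁ B₂ ≠ 3 := by
  change ¬ M.HasU24Minor ↔ _
  refine ⟨fun h B₁ B₂ hB₁ hB₂ h3 ↦ h (M.hasU24Minor_of_deltaPairs_eq_three hfin hB₁ hB₂ h3),
    fun h hM ↦ ?_⟩
  obtain ⟨B₁, B₂, hB₁, hB₂, h3⟩ := hM.exists_deltaPairs_eq_three hfin
  exact h B₁ B₂ hB₁ hB₂ h3
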